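/- Let Σ and Σ̂ be transitive partitions such that Σ̂ cart-imitates Σ via a bijection β : Σ → Σ̂ (i.e., Σ̂ weakly cart-imitates Σ and satisfies the cart-saturated condition). Then for all X, Y, Z ⊆ Σ: if ⋃X ⊇ (⋃Y) ⊗ (⋃Z), then ⋃β[X] ⊇ (⋃β[Y]) ⊗ (⋃β[Z]). -/

import Mathlib

open ZFSet

/-- A partition: a collection (as a ZFC set) of pairwise disjoint nonempty sets. -/
def IsPartition (S : ZFSet) : Prop :=
  (∀ σ ∈ S, σ ≠ (∅ : ZFSet)) ∧
    ∀ σ ∈ S, ∀ τ ∈ S, σ ≠ τ → σ ∩ τ = (∅ : ZFSet)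

/-- A transitive partition: a partition whose domain `⋃₀ S` is a transitive set. -/
def IsTransPartition (S : ZFSet) : Prop :=
  IsPartition S ∧ (⋃₀ S : ZFSet).IsTransitive

/-- `P*(X)`: the set of nonempty subsets of `⋃₀ X` meeting every block of `X`. -/
def powStar (X : ZFSet) : ZFSet :=
  ZFSet.sep (fun y => y ≠ (∅ : ZFSet) ∧ ∀ σ ∈ X, y ∩ σ ≠ (∅ : ZFSet))
    (ZFSet.powerset (⋃₀ X))

/-- `P*(X)_{1,2}`: the elements of `P*(X)` of cardinality 1 or 2. -/
def powStar12 (X : ZFSet) : ZFSet :=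
  ZFSet.sep (fun y => ∃ a b : ZFSet, y = insert a ({b} : ZFSet)) (powStar X)

/-- Unordered Cartesian product `S ⊗ T = {{s,t} : s ∈ S, t ∈ T}`. -/
def otimes (S T : ZFSet) : ZFSet :=
  ZFSet.sep (fun y => ∃ s ∈ S, ∃ t ∈ T, y = insert s ({t} : ZFSet))
    (ZFSet.powerset (S ∪ T))

/-- Image of a ZFC set under an arbitrary class function (classically definable). -/
noncomputable def zimg (f : ZFSet → ZFSet) (x : ZFSet) : ZFSet :=
  @ZFSet.image f (Classical.allZFSetDefinable _) x

/-- `Sh` weakly cart-imitates `Sg` via the bijection `β`. -/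
def WCartImitates (Sh Sg : ZFSet) (β : ZFSet → ZFSet) : Prop :=
  -- `β` is a bijection from the blocks of `Sg` onto the blocks of `Sh`
  (∀ σ : ZFSet, σ ∈ Sg → β σ ∈ Sh) ∧
  (∀ σ : ZFSet, σ ∈ Sg → ∀ τ : ZFSet, τ ∈ Sg → β σ = β τ → σ = τ) ∧
  (∀ τ : ZFSet, τ ∈ Sh → ∃ σ : ZFSet, σ ∈ Sg ∧ β σ = τ) ∧
  ∀ X : ZFSet, X ⊆ Sg → ∀ σ : ZFSet, σ ∈ Sg →
    -- (i)
    (powStar (zimg β X) ∩ β σ ≠ (∅ : ZFSet) → powStar X ∩ σ ≠ (∅ : ZFSet)) ∧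
    -- (ii)
    ((⋃₀ zimg β X : ZFSet) ∈ β σ ↔ (⋃₀ X : ZFSet) ∈ σ) ∧
    -- (iii)
    (powStar12 (zimg β X) ∩ β σ ≠ (∅ : ZFSet) ↔ powStar12 X ∩ σ ≠ (∅ : ZFSet)) ∧
    ((powStar (zimg β X) \ powStar12 (zimg β X)) ∩ β σ ≠ (∅ : ZFSet) ↔
      (powStar X \ powStar12 X) ∩ σ ≠ (∅ : ZFSet))

/-- `Sh` cart-imitates `Sg` via `β`: weak cart-imitation together with the
cart-saturated condition (iv). -/
def CartImitates (Sh Sg : ZFSet) (β : ZFSet → ZFSet) : Prop :=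
  WCartImitates Sh Sg β ∧
    ∀ X : ZFSet, X ⊆ Sg → powStar12 X ⊆ (⋃₀ Sg : ZFSet) →
      powStar12 (zimg β X) ⊆ (⋃₀ zimg β Sg : ZFSet)

/-! Given `s ∈ β σ` and `t ∈ β τ` with `σ ∈ Y`, `τ ∈ Z`, every element of `P*({σ, τ})_{1,2}` is a
pair from `σ ⊗ τ ⊆ ⋃Y ⊗ ⋃Z ⊆ ⋃X`. Cart-saturation (iv) puts `{s, t} ∈ P*({β σ, β τ})_{1,2}` into
some block `β ρ`, and (iii) pulls this back: `ρ` meets `P*({σ, τ})_{1,2} ⊆ ⋃X`, so `ρ ∈ X` because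
the blocks of `Σ` are disjoint. -/

namespace ZFSet

lemma ne_empty_iff_exists_mem {x : ZFSet} : x ≠ ∅ ↔ ∃ y, y ∈ x := by
  simp [eq_empty]

lemma inter_ne_empty_iff {x y : ZFSet} : x ∩ y ≠ ∅ ↔ ∃ z, z ∈ x ∧ z ∈ y := by
  simp [ne_empty_iff_exists_mem]

lemma pair_comm (a b : ZFSet) : ({a, b} : ZFSet) = {b, a} := by
  ext; simp [or_comm]

end ZFSet

lemma mem_zimg {f : ZFSet → ZFSet} {x y : ZFSet} : y ∈ zimg f x ↔ ∃ z ∈ x, f z = y :=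
  @ZFSet.mem_image f (Classical.allZFSetDefinable _) x y

lemma zimg_pair (f : ZFSet → ZFSet) (a b : ZFSet) : zimg f {a, b} = {f a, f b} := by
  ext y
  simp only [mem_zimg, ZFSet.mem_pair]
  grind

lemma mem_otimes {S T y : ZFSet} : y ∈ otimes S T ↔ ∃ s ∈ S, ∃ t ∈ T, y = {s, t} := by
  refine ZFSet.mem_sep.trans ⟨And.right, fun h => ⟨?_, h⟩⟩
  obtain ⟨s, hs, t, ht, rfl⟩ := h
  rw [ZFSet.mem_powerset]
  intro z hz
  rcases ZFSet.mem_pair.1 hz with rfl | rfl <;> simp [hs, ht]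

lemma mem_powStar {X y : ZFSet} :
    y ∈ powStar X ↔ y ⊆ ⋃₀ X ∧ y ≠ ∅ ∧ ∀ σ ∈ X, y ∩ σ ≠ ∅ := by
  rw [powStar, ZFSet.mem_sep, ZFSet.mem_powerset]

lemma mem_powStar12 {X y : ZFSet} :
    y ∈ powStar12 X ↔ y ∈ powStar X ∧ ∃ a b : ZFSet, y = {a, b} :=
  ZFSet.mem_sep

lemma pair_mem_powStar12_pair {σ τ s t : ZFSet} (hs : s ∈ σ) (ht : t ∈ τ) :
    ({s, t} : ZFSet) ∈ powStar12 {σ, τ} := by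
  refine mem_powStar12.2 ⟨mem_powStar.2 ⟨?_, ?_, ?_⟩, s, t, rfl⟩
  · intro z hz
    rcases ZFSet.mem_pair.1 hz with rfl | rfl
    · exact ZFSet.mem_sUnion_of_mem hs (by simp)
    · exact ZFSet.mem_sUnion_of_mem ht (by simp)
  · exact ZFSet.ne_empty_iff_exists_mem.2 ⟨s, by simp⟩
  · intro ρ hρ
    rcases ZFSet.mem_pair.1 hρ with rfl | rfl
    · exact ZFSet.inter_ne_empty_iff.2 ⟨s, by simp, hs⟩
    · exact ZFSet.inter_ne_empty_iff.2 ⟨t, by simp, ht⟩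

lemma exists_eq_pair_of_mem_powStar12_pair {σ τ y : ZFSet} (hy : y ∈ powStar12 {σ, τ}) :
    ∃ s ∈ σ, ∃ t ∈ τ, y = {s, t} := by
  obtain ⟨hyP, a, b, rfl⟩ := mem_powStar12.1 hy
  obtain ⟨hsub, -, hmeet⟩ := mem_powStar.1 hyP
  have hcover : ∀ z ∈ ({a, b} : ZFSet), z ∈ σ ∨ z ∈ τ := fun z hz => by
    simpa using hsub hz
  have ha := hcover a (by simp)
  have hb := hcover b (by simp)
  have hσ := hmeet σ (by simp)
  have hτ := hmeet τ (by simp)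
  simp only [ZFSet.inter_ne_empty_iff, ZFSet.mem_pair, exists_eq_or_imp, exists_eq_left] at hσ hτ
  rcases (by tauto : (a ∈ σ ∧ b ∈ τ) ∨ (b ∈ σ ∧ a ∈ τ)) with ⟨ha, hb⟩ | ⟨hb, ha⟩
  · exact ⟨a, ha, b, hb, rfl⟩
  · exact ⟨b, hb, a, ha, ZFSet.pair_comm a b⟩

lemma powStar12_pair_subset_otimes {σ τ S T : ZFSet} (hσ : σ ⊆ S) (hτ : τ ⊆ T) :
    powStar12 {σ, τ} ⊆ otimes S T := fun y hy => by
  obtain ⟨s, hs, t, ht, rfl⟩ := exists_eq_pair_of_mem_powStar12_pair hy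
  exact mem_otimes.2 ⟨s, hσ hs, t, hτ ht, rfl⟩

lemma IsPartition.mem_of_inter_ne_empty {S X A ρ : ZFSet} (hS : IsPartition S) (hX : X ⊆ S)
    (hA : A ⊆ ⋃₀ X) (hρ : ρ ∈ S) (hAρ : A ∩ ρ ≠ ∅) : ρ ∈ X := by
  obtain ⟨y, hyA, hyρ⟩ := ZFSet.inter_ne_empty_iff.1 hAρ
  obtain ⟨χ, hχ, hyχ⟩ := ZFSet.mem_sUnion.1 (hA hyA)
  obtain rfl : χ = ρ := by
    by_contra hne
    exact ZFSet.inter_ne_empty_iff.2 ⟨y, hyχ, hyρ⟩ (hS.2 χ (hX hχ) ρ hρ hne)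
  exact hχ

lemma CartImitates.powStar12_image_subset_sUnion_image {Sh Sg : ZFSet} {β : ZFSet → ZFSet}
    (hβ : CartImitates Sh Sg β) (hSg : IsPartition Sg) {X W : ZFSet} (hX : X ⊆ Sg)
    (hW : W ⊆ Sg) (hWX : powStar12 W ⊆ ⋃₀ X) : powStar12 (zimg β W) ⊆ ⋃₀ zimg β X := by
  intro y hy
  have hWSg : powStar12 W ⊆ ⋃₀ Sg := fun z hz => by
    obtain ⟨χ, hχ, hzχ⟩ := ZFSet.mem_sUnion.1 (hWX hz)
    exact ZFSet.mem_sUnion_of_mem hzχ (hX hχ)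
  obtain ⟨_, hρ', hyρ⟩ := ZFSet.mem_sUnion.1 (hβ.2 W hW hWSg hy) -- (iv)
  obtain ⟨ρ, hρ, rfl⟩ := mem_zimg.1 hρ'
  have hWρ : powStar12 W ∩ ρ ≠ ∅ := -- (iii)
    (hβ.1.2.2.2 W hW ρ hρ).2.2.1.1 (ZFSet.inter_ne_empty_iff.2 ⟨y, hy, hyρ⟩)
  have hρX : ρ ∈ X := hSg.mem_of_inter_ne_empty hX hWX hρ hWρ
  exact ZFSet.mem_sUnion_of_mem hyρ (mem_zimg.2 ⟨ρ, hρX, rfl⟩)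

theorem cart_imitates_otimes_superset_general
    (Sg Sh : ZFSet) (hSg : IsTransPartition Sg)
    (β : ZFSet → ZFSet) (hβ : CartImitates Sh Sg β) :
    ∀ X Y Z : ZFSet, X ⊆ Sg → Y ⊆ Sg → Z ⊆ Sg →
      otimes (⋃₀ Y : ZFSet) (⋃₀ Z : ZFSet) ⊆ (⋃₀ X : ZFSet) →
      otimes (⋃₀ zimg β Y : ZFSet) (⋃₀ zimg β Z : ZFSet) ⊆ (⋃₀ zimg β X : ZFSet) := by
  intro X Y Z hX hY hZ hYZX p hp
  obtain ⟨s, hs, t, ht, rfl⟩ := mem_otimes.1 hp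
  obtain ⟨_, hσ', hsσ⟩ := ZFSet.mem_sUnion.1 hs
  obtain ⟨σ, hσ, rfl⟩ := mem_zimg.1 hσ'
  obtain ⟨_, hτ', htτ⟩ := ZFSet.mem_sUnion.1 ht
  obtain ⟨τ, hτ, rfl⟩ := mem_zimg.1 hτ'
  have hW : ({σ, τ} : ZFSet) ⊆ Sg := fun ρ hρ => by
    rcases ZFSet.mem_pair.1 hρ with rfl | rfl
    exacts [hY hσ, hZ hτ]
  have hWX : powStar12 {σ, τ} ⊆ ⋃₀ X :=
    fun y hy => hYZX (powStar12_pair_subset_otimes (fun _ h => ZFSet.mem_sUnion_of_mem h hσ)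
      (fun _ h => ZFSet.mem_sUnion_of_mem h hτ) hy)
  have hst : ({s, t} : ZFSet) ∈ powStar12 (zimg β {σ, τ}) := by
    rw [zimg_pair]
    exact pair_mem_powStar12_pair hsσ htτ
  exact hβ.powStar12_image_subset_sUnion_image hSg.1 hX hW hWX hst

/-- cart-imitation transfers the reverse inclusion `⋃X ⊇ ⋃Y ⊗ ⋃Z`. -/
theorem cart_imitates_otimes_superset
    (Sg Sh : ZFSet) (hSg : IsTransPartition Sg) (hSh : IsTransPartition Sh)
    (β : ZFSet → ZFSet) (hβ : CartImitates Sh Sg β) :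
    ∀ X Y Z : ZFSet, X ⊆ Sg → Y ⊆ Sg → Z ⊆ Sg →
      otimes (⋃₀ Y : ZFSet) (⋃₀ Z : ZFSet) ⊆ (⋃₀ X : ZFSet) →
      otimes (⋃₀ zimg β Y : ZFSet) (⋃₀ zimg β Z : ZFSet) ⊆ (⋃₀ zimg β X : ZFSet) :=
  cart_imitates_otimes_superset_general Sg Sh hSg β hβ
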